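/- Let p : Ω → Λ be a connected covering of k-graphs, x a vertex of Λ, and v a vertex of Ω with p(v) = x. Then the automorphism group Aut(Ω,p) of the covering is isomorphic, as a group, to the quotient N(p_*π(Ω,v))/p_*π(Ω,v), where N(p_*π(Ω,v)) denotes the normalizer of the subgroup p_*π(Ω,v) in the fundamental group π(Λ,x). -/

import Mathlib

/-!
Arrows-only formalization of `k`-graphs (higher-rank graphs), their coverings,
fundamental groupoids, and groupoid actions, following Pask–Quigg–Raeburn,
"Coverings of k-graphs".

A small category is encoded by its set of arrows `A` together with
source/range maps `src rng : A → A` (whose common image is the set of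
identities = vertices) and a (guarded) total composition `comp : A → A → A`,
where `comp f g` is the composite "f after g", meaningful when `src f = rng g`.
A `k`-graph additionally has a degree map `deg : A → (Fin k → ℕ)` which is
functorial and satisfies the unique factorization property.
-/

namespace KGraphCovering

/-- A `k`-graph in arrows-only form. -/
structure KGraphStruct (k : ℕ) (A : Type) : Type where
  src : A → A
  rng : A → A
  comp : A → A → A
  deg : A → (Fin k → ℕ)
  src_src : ∀ f, src (src f) = src f
  rng_src : ∀ f, rng (src f) = src f
  src_rng : ∀ f, src (rng f) = rng f
  rng_rng : ∀ f, rng (rng f) = rng f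
  comp_src_id : ∀ f, comp f (src f) = f
  rng_comp_id : ∀ f, comp (rng f) f = f
  src_comp : ∀ f g, src f = rng g → src (comp f g) = src g
  rng_comp : ∀ f g, src f = rng g → rng (comp f g) = rng f
  assoc : ∀ f g h, src f = rng g → src g = rng h →
    comp (comp f g) h = comp f (comp g h)
  deg_comp : ∀ f g, src f = rng g → deg (comp f g) = deg f + deg g
  deg_src : ∀ f, deg (src f) = 0
  factor : ∀ f m n, deg f = m + n →
    ∃! q : A × A, src q.1 = rng q.2 ∧ deg q.1 = m ∧ deg q.2 = n ∧ comp q.1 q.2 = f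

namespace KGraphStruct

variable {k : ℕ} {A : Type}

/-- The vertices (objects) are the identity arrows. -/
def IsVertex (S : KGraphStruct k A) (v : A) : Prop := S.src v = v

/-- A `k`-graph is connected if the equivalence relation generated by
"there is a morphism from `v` to `u`" relates all pairs of vertices. -/
def Connected (S : KGraphStruct k A) : Prop :=
  ∀ u v, S.IsVertex u → S.IsVertex v →
    Relation.EqvGen (fun a b => ∃ f, S.rng f = a ∧ S.src f = b) u v

end KGraphStruct

/-- A groupoid in arrows-only form. -/
structure GroupoidStruct (B : Type) : Type where
  src : B → B
  rng : B → B
  comp : B → B → B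
  inv : B → B
  src_src : ∀ f, src (src f) = src f
  rng_src : ∀ f, rng (src f) = src f
  src_rng : ∀ f, src (rng f) = rng f
  rng_rng : ∀ f, rng (rng f) = rng f
  comp_src_id : ∀ f, comp f (src f) = f
  rng_comp_id : ∀ f, comp (rng f) f = f
  src_comp : ∀ f g, src f = rng g → src (comp f g) = src g
  rng_comp : ∀ f g, src f = rng g → rng (comp f g) = rng f
  assoc : ∀ f g h, src f = rng g → src g = rng h →
    comp (comp f g) h = comp f (comp g h)
  src_inv : ∀ f, src (inv f) = rng f
  rng_inv : ∀ f, rng (inv f) = src f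
  inv_comp_self : ∀ f, comp (inv f) f = src f
  comp_inv_self : ∀ f, comp f (inv f) = rng f

namespace GroupoidStruct

variable {B : Type}

/-- The vertices (objects) of a groupoid are the identity arrows. -/
def IsVertex (G : GroupoidStruct B) (v : B) : Prop := G.src v = v

/-- A subgroup of the isotropy group `x𝒢x`, as a set of arrows. -/
def IsSubgroupAt (G : GroupoidStruct B) (x : B) (H : Set B) : Prop :=
  (∀ a ∈ H, G.src a = x ∧ G.rng a = x) ∧ x ∈ H ∧
  (∀ a ∈ H, ∀ b ∈ H, G.comp a b ∈ H) ∧ (∀ a ∈ H, G.inv a ∈ H)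

/-- `K` is a conjugate of `H` in the isotropy group at `x`. -/
def ConjAt (G : GroupoidStruct B) (x : B) (H K : Set B) : Prop :=
  ∃ g, G.src g = x ∧ G.rng g = x ∧
    K = (fun a => G.comp (G.comp g a) (G.inv g)) '' H

/-- `H` is a normal subset of the isotropy group at `x`. -/
def IsNormalAt (G : GroupoidStruct B) (x : B) (H : Set B) : Prop :=
  ∀ g, G.src g = x → G.rng g = x → ∀ a ∈ H, G.comp (G.comp g a) (G.inv g) ∈ H

/-- The normalizer of `H` in the isotropy group at `x`. -/
def normalizerAt (G : GroupoidStruct B) (x : B) (H : Set B) : Set B :=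
  {g | G.src g = x ∧ G.rng g = x ∧
    (fun a => G.comp (G.comp g a) (G.inv g)) '' H = H}

end GroupoidStruct

/-- `f` is a morphism of `k`-graphs (a degree-preserving functor). -/
def IsKGraphHomFun {k : ℕ} {A A' : Type} (S : KGraphStruct k A)
    (T : KGraphStruct k A') (f : A → A') : Prop :=
  (∀ a, f (S.src a) = T.src (f a)) ∧
  (∀ a, f (S.rng a) = T.rng (f a)) ∧
  (∀ a b, S.src a = S.rng b → f (S.comp a b) = T.comp (f a) (f b)) ∧
  (∀ a, T.deg (f a) = S.deg a)

/-- `f` is a functor from a `k`-graph to a groupoid. -/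
def IsFunctorToGpdFun {k : ℕ} {A B : Type} (S : KGraphStruct k A)
    (G : GroupoidStruct B) (f : A → B) : Prop :=
  (∀ a, f (S.src a) = G.src (f a)) ∧
  (∀ a, f (S.rng a) = G.rng (f a)) ∧
  (∀ a b, S.src a = S.rng b → f (S.comp a b) = G.comp (f a) (f b))

/-- `f` is a morphism of groupoids (a functor). -/
def IsGpdHomFun {B C : Type} (G : GroupoidStruct B) (H : GroupoidStruct C)
    (f : B → C) : Prop :=
  (∀ a, f (G.src a) = H.src (f a)) ∧
  (∀ a, f (G.rng a) = H.rng (f a)) ∧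
  (∀ a b, G.src a = G.rng b → f (G.comp a b) = H.comp (f a) (f b))

/-- `p : Ω → Λ` is a covering of `k`-graphs: a surjective `k`-graph morphism
which maps `Ωv` bijectively onto `Λp(v)` and `vΩ` bijectively onto `p(v)Λ`
for every vertex `v` of `Ω`. -/
structure IsCovering {k : ℕ} {A A' : Type} (S : KGraphStruct k A')
    (T : KGraphStruct k A) (p : A' → A) : Prop where
  hom : IsKGraphHomFun S T p
  surj : Function.Surjective p
  src_inj : ∀ a b, S.src a = S.src b → p a = p b → a = b
  src_lift : ∀ v, S.IsVertex v → ∀ g, T.src g = p v → ∃ a, S.src a = v ∧ p a = g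
  rng_inj : ∀ a b, S.rng a = S.rng b → p a = p b → a = b
  rng_lift : ∀ v, S.IsVertex v → ∀ g, T.rng g = p v → ∃ a, S.rng a = v ∧ p a = g

/-- A fundamental groupoid of a `k`-graph `S`: a groupoid `G` whose object
set is identified with the vertex set of `S` via the canonical functor `i`
(which is bijective on objects), with the universal property that every
functor from `S` to a groupoid factors uniquely through `i`. -/
structure FundamentalGroupoid {k : ℕ} {A : Type} (S : KGraphStruct k A) :
    Type 1 where
  B : Type
  G : GroupoidStruct B
  i : A → B
  i_hom : IsFunctorToGpdFun S G i
  obj_bij : ∀ w, G.IsVertex w → ∃! v, S.IsVertex v ∧ i v = w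
  univ : ∀ {C : Type} (H : GroupoidStruct C) (F : A → C),
    IsFunctorToGpdFun S H F →
    ∃! F' : B → C, IsGpdHomFun G H F' ∧ ∀ a, F' (i a) = F a

/-- The fundamental group `π(Λ,x)` at a vertex `x`, as the isotropy of the
fundamental groupoid at `i x`. -/
def FundamentalGroupoid.pi1 {k : ℕ} {A : Type} {S : KGraphStruct k A}
    (F : FundamentalGroupoid S) (x : A) : Set F.B :=
  {a | F.G.src a = F.i x ∧ F.G.rng a = F.i x}

/-- An automorphism of the covering `p : Ω → Λ`. -/
def IsCoveringAut {k : ℕ} {A A' : Type} (Ω : KGraphStruct k A')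
    (Λ : KGraphStruct k A) (p : A' → A) (φ : A' → A') : Prop :=
  Function.Bijective φ ∧ IsKGraphHomFun Ω Ω φ ∧ ∀ a, p (φ a) = p a

/-- The action of the fundamental groupoid `F = 𝒢(Λ)` on the vertex set of a
covering `p : Ω → Λ`, determined by `i(p(λ)) ⬝ s(λ) = r(λ)`.  The fiber of a
vertex `w` of `Ω` is over the object `F.i (p w)`. -/
structure CorrespondingAction {k : ℕ} {A A' : Type} (Ω : KGraphStruct k A')
    (Λ : KGraphStruct k A) (F : FundamentalGroupoid Λ) (p : A' → A)
    (act : F.B → A' → A') : Prop where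
  act_vertex : ∀ a w, Ω.IsVertex w → F.G.src a = F.i (p w) →
    Ω.IsVertex (act a w) ∧ F.i (p (act a w)) = F.G.rng a
  act_id : ∀ w, Ω.IsVertex w → act (F.i (p w)) w = w
  act_comp : ∀ a b w, Ω.IsVertex w → F.G.src b = F.i (p w) →
    F.G.src a = F.G.rng b → act (F.G.comp a b) w = act a (act b w)
  act_cov : ∀ lam, act (F.i (p lam)) (Ω.src lam) = Ω.rng lam

/-- An action of a groupoid `G` on a set `V`, presented by an anchor map
`fib : V → B` (landing in vertices) and a guarded action map. -/
structure GpdActionStruct {B : Type} (G : GroupoidStruct B) (V : Type) :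
    Type where
  fib : V → B
  act : B → V → V
  fib_vertex : ∀ v, G.src (fib v) = fib v
  act_fib : ∀ a v, G.src a = fib v → fib (act a v) = G.rng a
  act_id : ∀ v, act (fib v) v = v
  act_comp : ∀ a b v, G.src b = fib v → G.src a = G.rng b →
    act (G.comp a b) v = act a (act b v)

namespace GpdActionStruct

variable {B V W : Type} {G : GroupoidStruct B}

/-- Transitivity of a groupoid action. -/
def Transitive (ρ : GpdActionStruct G V) : Prop :=
  ∀ u v : V, ∃ a, G.src a = ρ.fib v ∧ ρ.act a v = u

/-- The stability group of the action at `v`. -/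
def stab (ρ : GpdActionStruct G V) (v : V) : Set B :=
  {a | G.src a = ρ.fib v ∧ G.rng a = ρ.fib v ∧ ρ.act a v = v}

/-- Freeness of a groupoid action: all stability groups are trivial. -/
def Free (ρ : GpdActionStruct G V) : Prop :=
  ∀ (v : V) (a : B), a ∈ ρ.stab v → a = ρ.fib v

end GpdActionStruct

/-- A morphism of actions of the groupoid `G`: a fiber-preserving
equivariant map. -/
def IsActionHom {B V W : Type} {G : GroupoidStruct B}
    (ρ : GpdActionStruct G V) (σ : GpdActionStruct G W) (φ : V → W) : Prop :=
  (∀ v, σ.fib (φ v) = ρ.fib v) ∧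
  ∀ a v, G.src a = ρ.fib v → φ (ρ.act a v) = σ.act a (φ v)

/-- An automorphism of an action of the groupoid `G`. -/
def IsActionAut {B V : Type} {G : GroupoidStruct B}
    (ρ : GpdActionStruct G V) (φ : V → V) : Prop :=
  Function.Bijective φ ∧ IsActionHom ρ ρ φ

/-- A universal covering: a connected covering admitting a morphism of
coverings to every connected covering of the base. -/
def IsUniversalCovering {k : ℕ} {A A' : Type} (Ω : KGraphStruct k A')
    (Λ : KGraphStruct k A) (p : A' → A) : Prop :=
  IsCovering Ω Λ p ∧ Ω.Connected ∧
  ∀ (A'' : Type) (Sg : KGraphStruct k A'') (q : A'' → A),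
    IsCovering Sg Λ q → Sg.Connected →
    ∃ φ : A' → A'', IsKGraphHomFun Ω Sg φ ∧ ∀ a, q (φ a) = p a

end KGraphCovering

namespace KGraphCovering

/-!
The fundamental groupoid `𝒢(Λ)` acts on the vertices of `Ω` by unique path lifting: the
universal property maps `𝒢(Λ)` into the groupoid of bijections between the vertex fibres of
`p`. Since `Ω` is connected the action is transitive, and the stabilizer of `v` is `p_*π(Ω,v)`.
Covering endomorphisms commute with the action, so each is determined by its value at `v`, and
a vertex `w` over `x` is such a value exactly when `stab v ⊆ stab w`. As
`stab (c ⬝ v) = c (stab v) c⁻¹`, the vertices `c⁻¹ ⬝ v` with `c` in the normalizer `N` of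
`stab v` are the images of `v` under automorphisms, and `c ↦ (the automorphism with
v ↦ c⁻¹ ⬝ v)` is a homomorphism from `N` onto `Aut(Ω,p)` with kernel `stab v`.
-/

open Function Set

namespace GroupoidStruct

variable {B : Type} (G : GroupoidStruct B)

theorem eq_inv_of_comp_eq_src {x f : B} (h₁ : G.src x = G.rng f)
    (h₂ : G.comp x f = G.src f) : x = G.inv f :=
  calc x = G.comp x (G.comp f (G.inv f)) := by rw [G.comp_inv_self, ← h₁, G.comp_src_id]
    _ = G.comp (G.src f) (G.inv f) := by
      rw [← G.assoc _ _ _ h₁ (G.rng_inv f).symm, h₂]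
    _ = G.inv f := by rw [← G.rng_inv, G.rng_comp_id]

theorem inv_inv (f : B) : G.inv (G.inv f) = f :=
  (G.eq_inv_of_comp_eq_src (G.rng_inv f).symm (by rw [G.comp_inv_self, G.src_inv])).symm

theorem inv_comp {c c' : B} (h : G.src c = G.rng c') :
    G.inv (G.comp c c') = G.comp (G.inv c') (G.inv c) := by
  have h' : G.src (G.inv c') = G.rng (G.inv c) := by rw [G.src_inv, G.rng_inv, h]
  refine (G.eq_inv_of_comp_eq_src ?_ ?_).symm
  · rw [G.src_comp _ _ h', G.src_inv, G.rng_comp _ _ h]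
  · rw [G.assoc _ _ _ h' (by rw [G.src_inv, G.rng_comp _ _ h]),
      ← G.assoc _ _ _ (G.src_inv c) h, G.inv_comp_self, h, G.rng_comp_id,
      G.inv_comp_self, G.src_comp _ _ h]

theorem comp_inv_cancel_left {g a : B} (h : G.rng g = G.rng a) :
    G.comp g (G.comp (G.inv g) a) = a := by
  rw [← G.assoc _ _ _ (G.rng_inv g).symm (by rw [G.src_inv, h]), G.comp_inv_self, h,
    G.rng_comp_id]

theorem comp_inv_cancel_right {a g : B} (h : G.src a = G.rng g) :
    G.comp (G.comp a g) (G.inv g) = a := by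
  rw [G.assoc _ _ _ h (G.rng_inv g).symm, G.comp_inv_self, ← h, G.comp_src_id]

noncomputable def subgroupoid (P : B → Prop)
    (hcomp : ∀ a b, G.src a = G.rng b → P a → P b → P (G.comp a b))
    (hinv : ∀ a, P a → P (G.inv a)) : GroupoidStruct {a // P a} :=
  have hsrc : ∀ a, P a → P (G.src a) := fun a ha =>
    G.inv_comp_self a ▸ hcomp _ _ (G.src_inv a) (hinv a ha) ha
  have hrng : ∀ a, P a → P (G.rng a) := fun a ha =>
    G.comp_inv_self a ▸ hcomp _ _ (G.rng_inv a).symm ha (hinv a ha)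
  open Classical in
  { src := fun a => ⟨G.src a, hsrc a a.2⟩
    rng := fun a => ⟨G.rng a, hrng a a.2⟩
    comp := fun a b =>
      if h : G.src a = G.rng b then ⟨G.comp a b, hcomp a b h a.2 b.2⟩ else b
    inv := fun a => ⟨G.inv a, hinv a a.2⟩
    src_src := fun a => Subtype.ext (G.src_src a)
    rng_src := fun a => Subtype.ext (G.rng_src a)
    src_rng := fun a => Subtype.ext (G.src_rng a)
    rng_rng := fun a => Subtype.ext (G.rng_rng a)
    comp_src_id := fun a => by
      rw [dif_pos (G.rng_src a).symm]; exact Subtype.ext (G.comp_src_id a)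
    rng_comp_id := fun a => by
      rw [dif_pos (G.src_rng a)]; exact Subtype.ext (G.rng_comp_id a)
    src_comp := fun a b h => by
      rw [dif_pos (congrArg Subtype.val h)]
      exact Subtype.ext (G.src_comp a b (congrArg Subtype.val h))
    rng_comp := fun a b h => by
      rw [dif_pos (congrArg Subtype.val h)]
      exact Subtype.ext (G.rng_comp a b (congrArg Subtype.val h))
    assoc := fun a b c hab hbc => by
      have h₁ : G.src a = G.rng b := congrArg Subtype.val hab
      have h₂ : G.src b = G.rng c := congrArg Subtype.val hbc
      rw [dif_pos h₁, dif_pos h₂, dif_pos (by rw [G.src_comp _ _ h₁]; exact h₂),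
        dif_pos (by rw [G.rng_comp _ _ h₂]; exact h₁)]
      exact Subtype.ext (G.assoc a b c h₁ h₂)
    src_inv := fun a => Subtype.ext (G.src_inv a)
    rng_inv := fun a => Subtype.ext (G.rng_inv a)
    inv_comp_self := fun a => by
      rw [dif_pos (G.src_inv a)]; exact Subtype.ext (G.inv_comp_self a)
    comp_inv_self := fun a => by
      rw [dif_pos (G.rng_inv a).symm]; exact Subtype.ext (G.comp_inv_self a) }

end GroupoidStruct

theorem KGraphStruct.rng_eq_of_isVertex {k : ℕ} {A : Type} (S : KGraphStruct k A) {v : A}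
    (h : S.IsVertex v) : S.rng v = v := by
  have := S.rng_src v
  rwa [show S.src v = v from h] at this

namespace IsGpdHomFun

variable {B C D : Type} {G : GroupoidStruct B} {H : GroupoidStruct C} {f : B → C}

theorem map_inv (hf : IsGpdHomFun G H f) (a : B) : f (G.inv a) = H.inv (f a) :=
  H.eq_inv_of_comp_eq_src (by rw [← hf.1, ← hf.2.1, G.src_inv])
    (by rw [← hf.2.2 _ _ (G.src_inv a), G.inv_comp_self, hf.1])

theorem comp {K : GroupoidStruct D} {g : C → D} (hg : IsGpdHomFun H K g)
    (hf : IsGpdHomFun G H f) : IsGpdHomFun G K (g ∘ f) :=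
  ⟨fun a => by simp only [Function.comp, hf.1, hg.1],
    fun a => by simp only [Function.comp, hf.2.1, hg.2.1],
    fun a b h => by
      simp only [Function.comp, hf.2.2 a b h]
      exact hg.2.2 _ _ (by rw [← hf.1, ← hf.2.1, h])⟩

theorem id (G : GroupoidStruct B) : IsGpdHomFun G G id :=
  ⟨fun _ => rfl, fun _ => rfl, fun _ _ _ => rfl⟩

end IsGpdHomFun

namespace FundamentalGroupoid

variable {k : ℕ} {A : Type} {S : KGraphStruct k A} (F : FundamentalGroupoid S)

theorem isVertex_i {w : A} (h : S.IsVertex w) : F.G.IsVertex (F.i w) := by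
  rw [GroupoidStruct.IsVertex, ← F.i_hom.1, h]

theorem i_injOn {u w : A} (hu : S.IsVertex u) (hw : S.IsVertex w) (h : F.i u = F.i w) :
    u = w :=
  (F.obj_bij _ (F.isVertex_i hu)).unique ⟨hu, rfl⟩ ⟨hw, h.symm⟩

theorem exists_i_eq {c : F.B} (hc : F.G.IsVertex c) : ∃ w, S.IsVertex w ∧ F.i w = c :=
  (F.obj_bij c hc).exists

theorem induction_on {P : F.B → Prop} (c : F.B) (hi : ∀ a, P (F.i a))
    (hcomp : ∀ a b, F.G.src a = F.G.rng b → P a → P b → P (F.G.comp a b))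
    (hinv : ∀ a, P a → P (F.G.inv a)) : P c := by
  classical
  let R := F.G.subgroupoid P hcomp hinv
  have hiR : IsFunctorToGpdFun S R (fun a => ⟨F.i a, hi a⟩) := by
    refine ⟨fun a => Subtype.ext (F.i_hom.1 a), fun a => Subtype.ext (F.i_hom.2.1 a),
      fun a b h => ?_⟩
    have h' : F.G.src (F.i a) = F.G.rng (F.i b) := by rw [← F.i_hom.1, ← F.i_hom.2.1, h]
    refine Subtype.ext ?_
    show _ = Subtype.val (dite _ _ _)
    rw [dif_pos h']
    exact F.i_hom.2.2 a b h
  obtain ⟨r, ⟨hr, hri⟩, -⟩ := F.univ R _ hiR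
  have hval : IsGpdHomFun R F.G Subtype.val := by
    refine ⟨fun _ => rfl, fun _ => rfl, fun a b h => ?_⟩
    exact congrArg Subtype.val (dif_pos (congrArg Subtype.val h))
  have hid : Subtype.val ∘ r = id :=
    (F.univ F.G F.i F.i_hom).unique ⟨hval.comp hr, fun a => congrArg Subtype.val (hri a)⟩
      ⟨IsGpdHomFun.id F.G, fun _ => rfl⟩
  have := (r c).2
  rwa [show (r c).1 = c from congrFun hid c] at this

end FundamentalGroupoid


section Lifting

variable {k : ℕ} {A A' : Type} {Λ : KGraphStruct k A} {Ω : KGraphStruct k A'} {p : A' → A}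

theorem IsCovering.isVertex_map (hp : IsCovering Ω Λ p) {u : A'} (hu : Ω.IsVertex u) :
    Λ.IsVertex (p u) := by
  rw [KGraphStruct.IsVertex, ← hp.hom.1, hu]

variable (Ω p) in
/-- The lift of `g` with source `u`, or `u` itself if there is none. -/
noncomputable def srcLift (g : A) (u : A') : A' :=
  open Classical in if h : ∃ μ, Ω.src μ = u ∧ p μ = g then h.choose else u

variable (Ω p) in
noncomputable def rngLift (g : A) (u : A') : A' :=
  open Classical in if h : ∃ μ, Ω.rng μ = u ∧ p μ = g then h.choose else u

theorem srcLift_spec (hp : IsCovering Ω Λ p) {g : A} {u : A'} (hu : Ω.IsVertex u)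
    (hg : Λ.src g = p u) : Ω.src (srcLift Ω p g u) = u ∧ p (srcLift Ω p g u) = g := by
  have h := hp.src_lift u hu g hg
  rw [srcLift, dif_pos h]
  exact h.choose_spec

theorem srcLift_eq (hp : IsCovering Ω Λ p) {g : A} {u μ : A'} (h₁ : Ω.src μ = u)
    (h₂ : p μ = g) : srcLift Ω p g u = μ := by
  have h : ∃ μ', Ω.src μ' = u ∧ p μ' = g := ⟨μ, h₁, h₂⟩
  rw [srcLift, dif_pos h]
  exact hp.src_inj _ _ (h.choose_spec.1.trans h₁.symm) (h.choose_spec.2.trans h₂.symm)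

theorem rngLift_spec (hp : IsCovering Ω Λ p) {g : A} {u : A'} (hu : Ω.IsVertex u)
    (hg : Λ.rng g = p u) : Ω.rng (rngLift Ω p g u) = u ∧ p (rngLift Ω p g u) = g := by
  have h := hp.rng_lift u hu g hg
  rw [rngLift, dif_pos h]
  exact h.choose_spec

theorem rngLift_eq (hp : IsCovering Ω Λ p) {g : A} {u μ : A'} (h₁ : Ω.rng μ = u)
    (h₂ : p μ = g) : rngLift Ω p g u = μ := by
  have h : ∃ μ', Ω.rng μ' = u ∧ p μ' = g := ⟨μ, h₁, h₂⟩
  rw [rngLift, dif_pos h]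
  exact hp.rng_inj _ _ (h.choose_spec.1.trans h₁.symm) (h.choose_spec.2.trans h₂.symm)

end Lifting


section FiberGroupoid

variable {k : ℕ} {A A' : Type} {Λ : KGraphStruct k A} {Ω : KGraphStruct k A'} {p : A' → A}

variable (Ω p) in
def vertexFiber (y : A) : Set A' := {u | Ω.IsVertex u ∧ p u = y}

variable (Ω p) in
/-- A bijection between the vertex fibres over `source` and `target`, stored as a pair of
mutually inverse maps normalised to the identity off those fibres. -/
structure FiberBijection : Type where
  source : A
  target : A
  fwd : A' → A'
  bwd : A' → A'
  fwd_mem : ∀ u ∈ vertexFiber Ω p source, fwd u ∈ vertexFiber Ω p target ∧ bwd (fwd u) = u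
  bwd_mem : ∀ u ∈ vertexFiber Ω p target, bwd u ∈ vertexFiber Ω p source ∧ fwd (bwd u) = u
  fwd_of_notMem : ∀ u ∉ vertexFiber Ω p source, fwd u = u
  bwd_of_notMem : ∀ u ∉ vertexFiber Ω p target, bwd u = u

namespace FiberBijection

theorem ext_of_eqOn {q q' : FiberBijection Ω p} (hs : q.source = q'.source)
    (ht : q.target = q'.target) (hf : EqOn q.fwd q'.fwd (vertexFiber Ω p q.source)) :
    q = q' := by
  have hfwd : q.fwd = q'.fwd := funext fun u => by
    by_cases hu : u ∈ vertexFiber Ω p q.source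
    · exact hf hu
    · rw [q.fwd_of_notMem u hu, q'.fwd_of_notMem u (hs ▸ hu)]
  have hbwd : q.bwd = q'.bwd := funext fun u => by
    by_cases hu : u ∈ vertexFiber Ω p q.target
    · obtain ⟨hbu, hfbu⟩ := q.bwd_mem u hu
      calc q.bwd u = q'.bwd (q'.fwd (q.bwd u)) := ((q'.fwd_mem _ (hs ▸ hbu)).2).symm
        _ = q'.bwd u := by rw [← hfwd, hfbu]
    · rw [q.bwd_of_notMem u hu, q'.bwd_of_notMem u (ht ▸ hu)]
  cases q; cases q'
  dsimp only at hs ht hfwd hbwd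
  subst hs ht hfwd hbwd
  rfl

variable (Ω p) in
def id (y : A) : FiberBijection Ω p :=
  ⟨y, y, fun u => u, fun u => u, fun _ hu => ⟨hu, rfl⟩, fun _ hu => ⟨hu, rfl⟩,
    fun _ _ => rfl, fun _ _ => rfl⟩

def symm (q : FiberBijection Ω p) : FiberBijection Ω p :=
  ⟨q.target, q.source, q.bwd, q.fwd, q.bwd_mem, q.fwd_mem, q.bwd_of_notMem, q.fwd_of_notMem⟩

open Classical in
/-- `q` after `q'`. -/
noncomputable def comp (q q' : FiberBijection Ω p) (h : q.source = q'.target) :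
    FiberBijection Ω p where
  source := q'.source
  target := q.target
  fwd := (vertexFiber Ω p q'.source).piecewise (q.fwd ∘ q'.fwd) fun u => u
  bwd := (vertexFiber Ω p q.target).piecewise (q'.bwd ∘ q.bwd) fun u => u
  fwd_mem u hu := by
    obtain ⟨hu₁, hu₂⟩ := q'.fwd_mem u hu
    obtain ⟨hu₃, hu₄⟩ := q.fwd_mem _ (h ▸ hu₁)
    rw [piecewise, if_pos hu, comp_apply, piecewise, if_pos hu₃, comp_apply, hu₄, hu₂]
    exact ⟨hu₃, rfl⟩
  bwd_mem u hu := by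
    obtain ⟨hu₁, hu₂⟩ := q.bwd_mem u hu
    obtain ⟨hu₃, hu₄⟩ := q'.bwd_mem _ (h ▸ hu₁)
    rw [piecewise, if_pos hu, comp_apply, piecewise, if_pos hu₃, comp_apply, hu₄, hu₂]
    exact ⟨hu₃, rfl⟩
  fwd_of_notMem _ hu := piecewise_eq_of_notMem _ _ _ hu
  bwd_of_notMem _ hu := piecewise_eq_of_notMem _ _ _ hu

theorem comp_fwd_of_mem {q q' : FiberBijection Ω p} (h : q.source = q'.target) {u : A'}
    (hu : u ∈ vertexFiber Ω p q'.source) : (q.comp q' h).fwd u = q.fwd (q'.fwd u) :=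
  if_pos hu

end FiberBijection

open Classical in
variable (Ω p) in
noncomputable def fiberGroupoid : GroupoidStruct (FiberBijection Ω p) where
  src q := .id Ω p q.source
  rng q := .id Ω p q.target
  comp q q' := if h : q.source = q'.target then q.comp q' h else q'
  inv q := q.symm
  src_src _ := rfl
  rng_src _ := rfl
  src_rng _ := rfl
  rng_rng _ := rfl
  comp_src_id q := by
    refine (dif_pos rfl).trans ?_
    exact FiberBijection.ext_of_eqOn rfl rfl fun u hu => FiberBijection.comp_fwd_of_mem _ hu
  rng_comp_id q := by
    refine (dif_pos rfl).trans ?_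
    exact FiberBijection.ext_of_eqOn rfl rfl fun u hu => FiberBijection.comp_fwd_of_mem _ hu
  src_comp q q' h := by
    have h' : q.source = q'.target := congrArg FiberBijection.source h
    rw [dif_pos h']; rfl
  rng_comp q q' h := by
    have h' : q.source = q'.target := congrArg FiberBijection.source h
    rw [dif_pos h']; rfl
  assoc f g h hfg hgh := by
    have h₁ : f.source = g.target := congrArg FiberBijection.source hfg
    have h₂ : g.source = h.target := congrArg FiberBijection.source hgh
    rw [dif_pos h₁, dif_pos h₂, dif_pos (show (f.comp g h₁).source = h.target from h₂),
      dif_pos (show f.source = (g.comp h h₂).target from h₁)]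
    refine FiberBijection.ext_of_eqOn rfl rfl fun u hu => ?_
    have hu' : h.fwd u ∈ vertexFiber Ω p g.source := h₂ ▸ (h.fwd_mem u hu).1
    change u ∈ vertexFiber Ω p h.source at hu
    rw [FiberBijection.comp_fwd_of_mem (q' := h) _ hu,
      FiberBijection.comp_fwd_of_mem (q' := g) _ hu',
      FiberBijection.comp_fwd_of_mem (q' := g.comp h h₂) _ hu,
      FiberBijection.comp_fwd_of_mem (q' := h) _ hu]
  src_inv _ := rfl
  rng_inv _ := rfl
  inv_comp_self q := by
    refine (dif_pos rfl).trans ?_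
    refine FiberBijection.ext_of_eqOn rfl rfl fun u hu => ?_
    exact (FiberBijection.comp_fwd_of_mem (q := q.symm) rfl hu).trans (q.fwd_mem u hu).2
  comp_inv_self q := by
    refine (dif_pos rfl).trans ?_
    refine FiberBijection.ext_of_eqOn rfl rfl fun u hu => ?_
    exact (FiberBijection.comp_fwd_of_mem (q := q) (q' := q.symm) rfl hu).trans
      (q.bwd_mem u hu).2

end FiberGroupoid


section PathLifting

variable {k : ℕ} {A A' : Type} {Λ : KGraphStruct k A} {Ω : KGraphStruct k A'} {p : A' → A}

open Classical in
noncomputable def pathLift (hp : IsCovering Ω Λ p) (g : A) : FiberBijection Ω p where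
  source := Λ.src g
  target := Λ.rng g
  fwd := (vertexFiber Ω p (Λ.src g)).piecewise (fun u => Ω.rng (srcLift Ω p g u)) fun u => u
  bwd := (vertexFiber Ω p (Λ.rng g)).piecewise (fun u => Ω.src (rngLift Ω p g u)) fun u => u
  fwd_mem u hu := by
    obtain ⟨hμ₁, hμ₂⟩ := srcLift_spec hp hu.1 hu.2.symm
    have hr : Ω.rng (srcLift Ω p g u) ∈ vertexFiber Ω p (Λ.rng g) :=
      ⟨Ω.src_rng _, by rw [hp.hom.2.1, hμ₂]⟩
    rw [piecewise, if_pos hu, piecewise, if_pos hr, rngLift_eq hp rfl hμ₂, hμ₁]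
    exact ⟨hr, rfl⟩
  bwd_mem u hu := by
    obtain ⟨hμ₁, hμ₂⟩ := rngLift_spec hp hu.1 hu.2.symm
    have hs : Ω.src (rngLift Ω p g u) ∈ vertexFiber Ω p (Λ.src g) :=
      ⟨Ω.src_src _, by rw [hp.hom.1, hμ₂]⟩
    rw [piecewise, if_pos hu, piecewise, if_pos hs, srcLift_eq hp rfl hμ₂, hμ₁]
    exact ⟨hs, rfl⟩
  fwd_of_notMem _ hu := if_neg hu
  bwd_of_notMem _ hu := if_neg hu

theorem pathLift_fwd_of_mem (hp : IsCovering Ω Λ p) {g : A} {u : A'}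
    (hu : u ∈ vertexFiber Ω p (Λ.src g)) :
    (pathLift hp g).fwd u = Ω.rng (srcLift Ω p g u) :=
  if_pos hu

theorem pathLift_isFunctor (hp : IsCovering Ω Λ p) :
    IsFunctorToGpdFun Λ (fiberGroupoid Ω p) (pathLift hp) := by
  have hvertex : ∀ {w : A} {u : A'}, Λ.IsVertex w → u ∈ vertexFiber Ω p w →
      (pathLift hp w).fwd u = u := fun {w u} hw hu => by
    have hu' : u ∈ vertexFiber Ω p (Λ.src w) := by rwa [hw]
    rw [pathLift_fwd_of_mem hp hu', srcLift_eq hp hu.1 hu.2,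
      Ω.rng_eq_of_isVertex hu.1]
  refine ⟨fun g => ?_, fun g => ?_, fun g h hgh => ?_⟩
  · exact FiberBijection.ext_of_eqOn (Λ.src_src g) (Λ.rng_src g)
      fun u hu => hvertex (Λ.src_src g) ((Λ.src_src g) ▸ hu)
  · exact FiberBijection.ext_of_eqOn (Λ.src_rng g) (Λ.rng_rng g)
      fun u hu => hvertex (Λ.src_rng g) ((Λ.src_rng g) ▸ hu)
  · refine Eq.trans ?_ (dif_pos hgh).symm
    refine FiberBijection.ext_of_eqOn (Λ.src_comp g h hgh) (Λ.rng_comp g h hgh) fun u hu => ?_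
    have hu' : u ∈ vertexFiber Ω p (Λ.src h) := Λ.src_comp g h hgh ▸ hu
    obtain ⟨hβ₁, hβ₂⟩ := srcLift_spec hp hu'.1 hu'.2.symm
    have hv := ((pathLift hp h).fwd_mem u hu').1
    rw [pathLift_fwd_of_mem hp hu'] at hv
    have hv' : Ω.rng (srcLift Ω p h u) ∈ vertexFiber Ω p (Λ.src g) := hgh ▸ hv
    obtain ⟨hα₁, hα₂⟩ := srcLift_spec hp hv'.1 hv'.2.symm
    have hαβ : Ω.src (srcLift Ω p g (Ω.rng (srcLift Ω p h u))) = Ω.rng (srcLift Ω p h u) :=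
      hα₁
    rw [pathLift_fwd_of_mem hp hu,
      FiberBijection.comp_fwd_of_mem (q := pathLift hp g) (q' := pathLift hp h) hgh hu',
      pathLift_fwd_of_mem hp hu', pathLift_fwd_of_mem hp hv',
      srcLift_eq hp ((Ω.src_comp _ _ hαβ).trans hβ₁)
        ((hp.hom.2.2.1 _ _ hαβ).trans (by rw [hα₂, hβ₂])),
      Ω.rng_comp _ _ hαβ]

end PathLifting


section Action

variable {k : ℕ} {A A' : Type} {Λ : KGraphStruct k A} {Ω : KGraphStruct k A'} {p : A' → A}

theorem exists_correspondingAction (hp : IsCovering Ω Λ p) (F : FundamentalGroupoid Λ) :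
    ∃ act, CorrespondingAction Ω Λ F p act := by
  obtain ⟨Ξ, ⟨hΞ, hΞi⟩, -⟩ :=
    F.univ (fiberGroupoid Ω p) (pathLift hp) (pathLift_isFunctor hp)
  have hobj : ∀ c, F.G.IsVertex c → Λ.IsVertex (Ξ c).source ∧ F.i (Ξ c).source = c := by
    intro c hc
    obtain ⟨w, hw, rfl⟩ := F.exists_i_eq hc
    rw [hΞi, show (pathLift hp w).source = w from hw]
    exact ⟨hw, rfl⟩
  have hsrc : ∀ c, Λ.IsVertex (Ξ c).source ∧ F.i (Ξ c).source = F.G.src c := fun c => by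
    have h := hobj _ (F.G.src_src c)
    rw [hΞ.1 c] at h
    exact h
  have hrng : ∀ c, Λ.IsVertex (Ξ c).target ∧ F.i (Ξ c).target = F.G.rng c := fun c => by
    have h := hobj _ (F.G.src_rng c)
    rw [hΞ.2.1 c] at h
    exact h
  have hmem : ∀ c w, Ω.IsVertex w → F.G.src c = F.i (p w) →
      w ∈ vertexFiber Ω p (Ξ c).source := fun c w hw hc =>
    ⟨hw, (F.i_injOn (hsrc c).1 (hp.isVertex_map hw) ((hsrc c).2.trans hc)).symm⟩
  have hlift : ∀ g, ∀ u ∈ vertexFiber Ω p (Λ.src g),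
      (Ξ (F.i g)).fwd u = Ω.rng (srcLift Ω p g u) := fun g u hu => by
    rw [hΞi]; exact pathLift_fwd_of_mem hp hu
  refine ⟨fun c => (Ξ c).fwd, ⟨fun c w hw hc => ?_, fun w hw => ?_,
    fun a b w hw hb hab => ?_, fun μ => ?_⟩⟩
  · obtain ⟨⟨hv, hpv⟩, -⟩ := (Ξ c).fwd_mem w (hmem c w hw hc)
    exact ⟨hv, by rw [hpv, (hrng c).2]⟩
  · have hw' : w ∈ vertexFiber Ω p (Λ.src (p w)) := ⟨hw, (hp.isVertex_map hw).symm⟩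
    rw [hlift _ w hw', srcLift_eq hp hw rfl, Ω.rng_eq_of_isVertex hw]
  · have h : (Ξ a).source = (Ξ b).target :=
      F.i_injOn (hsrc a).1 (hrng b).1 ((hsrc a).2.trans (hab.trans (hrng b).2.symm))
    show (Ξ (F.G.comp a b)).fwd w = (Ξ a).fwd ((Ξ b).fwd w)
    rw [hΞ.2.2 a b hab]
    exact (congrArg (fun q => FiberBijection.fwd q w) (dif_pos h)).trans
      (FiberBijection.comp_fwd_of_mem h (hmem b w hw hb))
  · rw [hlift _ _ ⟨Ω.src_src μ, hp.hom.1 μ⟩, srcLift_eq hp rfl rfl]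

variable {F : FundamentalGroupoid Λ} {act : F.B → A' → A'}

namespace CorrespondingAction

theorem act_inv_act (ha : CorrespondingAction Ω Λ F p act) {a : F.B} {w : A'}
    (hw : Ω.IsVertex w) (hc : F.G.src a = F.i (p w)) :
    act (F.G.inv a) (act a w) = w := by
  rw [← ha.act_comp _ _ w hw hc (F.G.src_inv a), F.G.inv_comp_self, hc, ha.act_id w hw]

theorem act_act_inv (ha : CorrespondingAction Ω Λ F p act) {a : F.B} {w : A'}
    (hw : Ω.IsVertex w) (hc : F.G.rng a = F.i (p w)) :
    act a (act (F.G.inv a) w) = w := by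
  rw [← ha.act_comp _ _ w hw (by rw [F.G.src_inv, hc]) (F.G.rng_inv a).symm,
    F.G.comp_inv_self, hc, ha.act_id w hw]

theorem p_act (ha : CorrespondingAction Ω Λ F p act) (hp : IsCovering Ω Λ p) {a : F.B}
    {w u : A'} (hw : Ω.IsVertex w) (hc : F.G.src a = F.i (p w)) (hu : Ω.IsVertex u)
    (hr : F.G.rng a = F.i (p u)) :
    p (act a w) = p u :=
  F.i_injOn (hp.isVertex_map (ha.act_vertex a w hw hc).1) (hp.isVertex_map hu)
    ((ha.act_vertex a w hw hc).2.trans hr)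

theorem induction_on (ha : CorrespondingAction Ω Λ F p act) (hp : IsCovering Ω Λ p)
    {Q : F.B → A' → Prop} {c : F.B} {u : A'} (hu : Ω.IsVertex u) (hc : F.G.src c = F.i (p u))
    (lift : ∀ μ, Q (F.i (p μ)) (Ω.src μ))
    (comp : ∀ a b w, Ω.IsVertex w → F.G.src b = F.i (p w) → F.G.src a = F.G.rng b →
      Q b w → Q a (act b w) → Q (F.G.comp a b) w)
    (inv : ∀ a w, Ω.IsVertex w → F.G.rng a = F.i (p w) →
      Q a (act (F.G.inv a) w) → Q (F.G.inv a) w) : Q c u := by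
  refine F.induction_on (P := fun c => ∀ u, Ω.IsVertex u → F.G.src c = F.i (p u) → Q c u)
    c ?_ ?_ ?_ u hu hc
  · intro g u hu hc
    obtain ⟨μ, rfl, rfl⟩ := hp.src_lift u hu g
      (F.i_injOn (Λ.src_src g) (hp.isVertex_map hu) ((F.i_hom.1 g).trans hc))
    exact lift μ
  · intro a b hab iha ihb u hu hc
    rw [F.G.src_comp _ _ hab] at hc
    have hv := ha.act_vertex b u hu hc
    exact comp a b u hu hc hab (ihb u hu hc) (iha _ hv.1 (hab.trans hv.2.symm))
  · intro a iha u hu hc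
    rw [F.G.src_inv] at hc
    have hv := ha.act_vertex (F.G.inv a) u hu (by rw [F.G.src_inv, hc])
    exact inv a u hu hc (iha _ hv.1 (by rw [hv.2, F.G.rng_inv]))

theorem exists_act_eq (ha : CorrespondingAction Ω Λ F p act) (hp : IsCovering Ω Λ p)
    (hconn : Ω.Connected) {u u' : A'} (hu : Ω.IsVertex u) (hu' : Ω.IsVertex u') :
    ∃ c, F.G.src c = F.i (p u') ∧ act c u' = u := by
  -- Phrased through sources, so that it also covers the non-vertex pairs given by reflexivity.
  suffices H : ∀ a b, Relation.EqvGen (fun a b => ∃ f, Ω.rng f = a ∧ Ω.src f = b) a b →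
      ∃ c, F.G.src c = F.i (p (Ω.src b)) ∧ act c (Ω.src b) = Ω.src a by
    simpa only [show Ω.src u = u from hu, show Ω.src u' = u' from hu'] using
      H u u' (hconn u u' hu hu')
  intro a b hab
  induction hab with
  | rel a b h =>
    obtain ⟨f, rfl, rfl⟩ := h
    exact ⟨F.i (p f), by rw [Ω.src_src, hp.hom.1, F.i_hom.1],
      by rw [Ω.src_src, ha.act_cov, Ω.src_rng]⟩
  | refl a =>
    exact ⟨F.i (p (Ω.src a)), by rw [← F.i_hom.1, ← hp.hom.1, Ω.src_src],
      ha.act_id _ (Ω.src_src a)⟩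
  | symm a b _ ih =>
    obtain ⟨c, hc, hca⟩ := ih
    refine ⟨F.G.inv c, ?_, ?_⟩
    · rw [F.G.src_inv, ← hca, (ha.act_vertex c _ (Ω.src_src b) hc).2]
    · rw [← hca, ha.act_inv_act (Ω.src_src b) hc]
  | trans a b c _ _ ih₁ ih₂ =>
    obtain ⟨d₁, hd₁, e₁⟩ := ih₁
    obtain ⟨d₂, hd₂, e₂⟩ := ih₂
    have h : F.G.src d₁ = F.G.rng d₂ := by
      rw [hd₁, ← e₂, (ha.act_vertex d₂ _ (Ω.src_src c) hd₂).2]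
    refine ⟨F.G.comp d₁ d₂, by rw [F.G.src_comp _ _ h, hd₂], ?_⟩
    rw [ha.act_comp _ _ _ (Ω.src_src c) hd₂ h, e₂, e₁]

variable {FΩ : FundamentalGroupoid Ω} {pst : FΩ.B → F.B}

theorem rng_eq_i_act_pst (ha : CorrespondingAction Ω Λ F p act)
    (hpst : IsGpdHomFun FΩ.G F.G pst) (hpsti : ∀ a, pst (FΩ.i a) = F.i (p a)) {b : FΩ.B}
    {u : A'} (hu : Ω.IsVertex u)
    (hb : FΩ.G.src b = FΩ.i u) : FΩ.G.rng b = FΩ.i (act (pst b) u) := by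
  have hsrc : ∀ {b u}, FΩ.G.src b = FΩ.i u → F.G.src (pst b) = F.i (p u) := fun hb => by
    rw [← hpst.1, hb, hpsti]
  refine FΩ.induction_on
    (P := fun b => ∀ u, Ω.IsVertex u → FΩ.G.src b = FΩ.i u →
      FΩ.G.rng b = FΩ.i (act (pst b) u))
    b ?_ ?_ ?_ u hu hb
  · intro μ u hu hb
    obtain rfl : Ω.src μ = u := FΩ.i_injOn (Ω.src_src μ) hu ((FΩ.i_hom.1 μ).trans hb)
    rw [← FΩ.i_hom.2.1, hpsti, ha.act_cov]
  · intro a b hab iha ihb u hu hb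
    rw [FΩ.G.src_comp _ _ hab] at hb
    have hv := (ha.act_vertex _ u hu (hsrc hb)).1
    rw [FΩ.G.rng_comp _ _ hab, iha _ hv (hab.trans (ihb u hu hb)), hpst.2.2 _ _ hab,
      ha.act_comp _ _ u hu (hsrc hb) (by rw [← hpst.1, ← hpst.2.1, hab])]
  · intro a iha u hu hb
    rw [FΩ.G.src_inv] at hb
    obtain ⟨u', hu', hsa⟩ := FΩ.exists_i_eq (FΩ.G.src_src a)
    have hpa := hsrc hsa.symm
    have hu_eq : u = act (pst a) u' :=
      FΩ.i_injOn hu (ha.act_vertex _ _ hu' hpa).1 (hb.symm.trans (iha u' hu' hsa.symm))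
    rw [FΩ.G.rng_inv, hpst.map_inv, hu_eq, ha.act_inv_act hu' hpa, hsa]

theorem exists_pst_eq (ha : CorrespondingAction Ω Λ F p act) (hp : IsCovering Ω Λ p)
    (hpst : IsGpdHomFun FΩ.G F.G pst) (hpsti : ∀ a, pst (FΩ.i a) = F.i (p a)) {c : F.B}
    {u : A'} (hu : Ω.IsVertex u)
    (hc : F.G.src c = F.i (p u)) : ∃ b, FΩ.G.src b = FΩ.i u ∧ pst b = c := by
  refine ha.induction_on (Q := fun c u => ∃ b, FΩ.G.src b = FΩ.i u ∧ pst b = c) hp hu hc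
    (fun μ => ⟨FΩ.i μ, (FΩ.i_hom.1 μ).symm, hpsti μ⟩) ?_ ?_
  · rintro a b w hw - - ⟨β, hβ, rfl⟩ ⟨α, hα, rfl⟩
    have h : FΩ.G.src α = FΩ.G.rng β := by rw [hα, ha.rng_eq_i_act_pst hpst hpsti hw hβ]
    exact ⟨FΩ.G.comp α β, by rw [FΩ.G.src_comp _ _ h, hβ], hpst.2.2 _ _ h⟩
  · rintro a w hw hr ⟨α, hα, rfl⟩
    have hv := ha.act_vertex (F.G.inv (pst α)) w hw (by rw [F.G.src_inv, hr])
    refine ⟨FΩ.G.inv α, ?_, hpst.map_inv α⟩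
    rw [FΩ.G.src_inv, ha.rng_eq_i_act_pst hpst hpsti hv.1 hα, ha.act_act_inv hw hr]

end CorrespondingAction

end Action


section Stabilizer

variable {k : ℕ} {A A' : Type} {Λ : KGraphStruct k A} {Ω : KGraphStruct k A'}
  {F : FundamentalGroupoid Λ} {p : A' → A} {act : F.B → A' → A'}

variable (F p act) in
def stabilizer (u : A') : Set F.B :=
  {a | F.G.src a = F.i (p u) ∧ F.G.rng a = F.i (p u) ∧ act a u = u}

theorem CorrespondingAction.pst_image_pi1 (ha : CorrespondingAction Ω Λ F p act)
    (hp : IsCovering Ω Λ p) {FΩ : FundamentalGroupoid Ω} {pst : FΩ.B → F.B}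
    (hpst : IsGpdHomFun FΩ.G F.G pst) (hpsti : ∀ a, pst (FΩ.i a) = F.i (p a)) {v : A'}
    (hv : Ω.IsVertex v) : pst '' FΩ.pi1 v = stabilizer F p act v := by
  ext a
  constructor
  · rintro ⟨b, ⟨hb₁, hb₂⟩, rfl⟩
    have hsrc : F.G.src (pst b) = F.i (p v) := by rw [← hpst.1, hb₁, hpsti]
    refine ⟨hsrc, by rw [← hpst.2.1, hb₂, hpsti], ?_⟩
    exact (FΩ.i_injOn hv (ha.act_vertex _ v hv hsrc).1
      (hb₂.symm.trans (ha.rng_eq_i_act_pst hpst hpsti hv hb₁))).symm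
  · rintro ⟨ha₁, -, ha₃⟩
    obtain ⟨b, hb, rfl⟩ := ha.exists_pst_eq hp hpst hpsti hv ha₁
    exact ⟨b, ⟨hb, by rw [ha.rng_eq_i_act_pst hpst hpsti hv hb, ha₃]⟩, rfl⟩

theorem stabilizer_act (ha : CorrespondingAction Ω Λ F p act) {d : F.B} {u : A'}
    (hu : Ω.IsVertex u) (hd : F.G.src d = F.i (p u)) :
    stabilizer F p act (act d u) =
      (fun a => F.G.comp (F.G.comp d a) (F.G.inv d)) '' stabilizer F p act u := by
  have hdu := (ha.act_vertex d u hu hd).2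
  ext b
  constructor
  · rintro ⟨hb₁, hb₂, hb₃⟩
    rw [hdu] at hb₁ hb₂
    have hbd : F.G.src (F.G.inv d) = F.G.rng (F.G.comp b d) := by
      rw [F.G.src_inv, F.G.rng_comp _ _ hb₁, hb₂]
    refine ⟨F.G.comp (F.G.inv d) (F.G.comp b d), ⟨?_, ?_, ?_⟩, ?_⟩
    · rw [F.G.src_comp _ _ hbd, F.G.src_comp _ _ hb₁, hd]
    · rw [F.G.rng_comp _ _ hbd, F.G.rng_inv, hd]
    · rw [ha.act_comp _ _ u hu (by rw [F.G.src_comp _ _ hb₁, hd]) hbd,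
        ha.act_comp _ _ u hu hd hb₁, hb₃, ha.act_inv_act hu hd]
    · dsimp only
      rw [F.G.comp_inv_cancel_left (by rw [F.G.rng_comp _ _ hb₁, hb₂]),
        F.G.comp_inv_cancel_right hb₁]
  · rintro ⟨a, ⟨ha₁, ha₂, ha₃⟩, rfl⟩
    have hda : F.G.src d = F.G.rng a := by rw [hd, ha₂]
    have hdad : F.G.src (F.G.comp d a) = F.G.rng (F.G.inv d) := by
      rw [F.G.src_comp _ _ hda, ha₁, F.G.rng_inv, hd]
    have hw := ha.act_vertex d u hu hd
    refine ⟨?_, ?_, ?_⟩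
    · rw [F.G.src_comp _ _ hdad, F.G.src_inv, hdu]
    · rw [F.G.rng_comp _ _ hdad, F.G.rng_comp _ _ hda, hdu]
    · rw [ha.act_comp _ _ _ hw.1 (by rw [F.G.src_inv, hdu]) hdad, ha.act_inv_act hu hd,
        ha.act_comp _ _ u hu (by rw [ha₁]) hda, ha₃]

theorem inv_mem_stabilizer (ha : CorrespondingAction Ω Λ F p act) {u : A'} (hu : Ω.IsVertex u)
    {a : F.B} (h : a ∈ stabilizer F p act u) : F.G.inv a ∈ stabilizer F p act u := by
  obtain ⟨h₁, h₂, h₃⟩ := h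
  refine ⟨by rw [F.G.src_inv, h₂], by rw [F.G.rng_inv, h₁], ?_⟩
  conv_lhs => rw [← h₃]
  exact ha.act_inv_act hu h₁

theorem act_eq_act_of_stabilizer_subset (ha : CorrespondingAction Ω Λ F p act) {v w : A'}
    (hv : Ω.IsVertex v) (hw : Ω.IsVertex w) (hpw : p w = p v)
    (hsub : stabilizer F p act v ⊆ stabilizer F p act w) {e e' : F.B}
    (he : F.G.src e = F.i (p v)) (he' : F.G.src e' = F.i (p v)) (h : act e v = act e' v) :
    act e w = act e' w := by
  have hr : F.G.rng e = F.G.rng e' := by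
    rw [← (ha.act_vertex e v hv he).2, h, (ha.act_vertex e' v hv he').2]
  have hg : F.G.src (F.G.inv e) = F.G.rng e' := by rw [F.G.src_inv, hr]
  have hmem : F.G.comp (F.G.inv e) e' ∈ stabilizer F p act v :=
    ⟨by rw [F.G.src_comp _ _ hg, he'], by rw [F.G.rng_comp _ _ hg, F.G.rng_inv, he],
      by rw [ha.act_comp _ _ v hv he' hg, ← h, ha.act_inv_act hv he]⟩
  have he'w : F.G.src e' = F.i (p w) := by rw [hpw, he']
  have hfix := (hsub hmem).2.2
  rw [ha.act_comp _ _ w hw he'w hg] at hfix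
  calc act e w = act e (act (F.G.inv e) (act e' w)) := by rw [hfix]
    _ = act e' w := ha.act_act_inv (ha.act_vertex e' w hw he'w).1
        (by rw [hr, (ha.act_vertex e' w hw he'w).2])

theorem mem_normalizerAt_stabilizer_iff (ha : CorrespondingAction Ω Λ F p act) {v : A'}
    (hv : Ω.IsVertex v) {c : F.B} :
    c ∈ F.G.normalizerAt (F.i (p v)) (stabilizer F p act v) ↔ F.G.src c = F.i (p v) ∧
      F.G.rng c = F.i (p v) ∧ stabilizer F p act (act c v) = stabilizer F p act v :=
  and_congr_right fun h₁ => and_congr_right fun _ => by rw [stabilizer_act ha hv h₁]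

theorem inv_mem_normalizerAt_stabilizer (ha : CorrespondingAction Ω Λ F p act) {v : A'}
    (hv : Ω.IsVertex v) {c : F.B}
    (hc : c ∈ F.G.normalizerAt (F.i (p v)) (stabilizer F p act v)) :
    F.G.inv c ∈ F.G.normalizerAt (F.i (p v)) (stabilizer F p act v) := by
  obtain ⟨h₁, h₂, h₃⟩ := (mem_normalizerAt_stabilizer_iff ha hv).1 hc
  have hcv := ha.act_vertex c v hv h₁
  have hi : F.G.src (F.G.inv c) = F.i (p v) := by rw [F.G.src_inv, h₂]
  refine (mem_normalizerAt_stabilizer_iff ha hv).2 ⟨hi, by rw [F.G.rng_inv, h₁], ?_⟩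
  have h := stabilizer_act ha hcv.1 (d := F.G.inv c) (by rw [F.G.src_inv, hcv.2])
  rw [ha.act_inv_act hv h₁, h₃, ← stabilizer_act ha hv hi] at h
  exact h.symm

theorem comp_mem_normalizerAt_stabilizer (ha : CorrespondingAction Ω Λ F p act) {v : A'}
    (hv : Ω.IsVertex v) {c c' : F.B}
    (hc : c ∈ F.G.normalizerAt (F.i (p v)) (stabilizer F p act v))
    (hc' : c' ∈ F.G.normalizerAt (F.i (p v)) (stabilizer F p act v)) :
    F.G.comp c c' ∈ F.G.normalizerAt (F.i (p v)) (stabilizer F p act v) := by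
  obtain ⟨h₁, h₂, h₃⟩ := (mem_normalizerAt_stabilizer_iff ha hv).1 hc
  obtain ⟨h₁', h₂', h₃'⟩ := (mem_normalizerAt_stabilizer_iff ha hv).1 hc'
  have hcc : F.G.src c = F.G.rng c' := by rw [h₁, h₂']
  have hc'v := ha.act_vertex c' v hv h₁'
  refine (mem_normalizerAt_stabilizer_iff ha hv).2
    ⟨by rw [F.G.src_comp _ _ hcc, h₁'], by rw [F.G.rng_comp _ _ hcc, h₂], ?_⟩
  rw [ha.act_comp _ _ v hv h₁' hcc, stabilizer_act ha hc'v.1 (by rw [hc'v.2, hcc]), h₃',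
    ← stabilizer_act ha hv h₁, h₃]

end Stabilizer


section CoveringEndo

variable {k : ℕ} {A A' : Type} {Λ : KGraphStruct k A} {Ω : KGraphStruct k A'}
  {F : FundamentalGroupoid Λ} {p : A' → A} {act : F.B → A' → A'} {φ ψ : A' → A'}

variable (Ω p) in
def IsCoveringEndo (φ : A' → A') : Prop :=
  IsKGraphHomFun Ω Ω φ ∧ ∀ a, p (φ a) = p a

theorem isCoveringEndo_id : IsCoveringEndo Ω p id :=
  ⟨⟨fun _ => rfl, fun _ => rfl, fun _ _ _ => rfl, fun _ => rfl⟩, fun _ => rfl⟩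

theorem IsCoveringEndo.comp (hφ : IsCoveringEndo Ω p φ) (hψ : IsCoveringEndo Ω p ψ) :
    IsCoveringEndo Ω p (φ ∘ ψ) := by
  refine ⟨⟨fun a => ?_, fun a => ?_, fun a b h => ?_, fun a => ?_⟩, fun a => ?_⟩
  · simp only [Function.comp, hψ.1.1, hφ.1.1]
  · simp only [Function.comp, hψ.1.2.1, hφ.1.2.1]
  · simp only [Function.comp, hψ.1.2.2.1 a b h]
    exact hφ.1.2.2.1 _ _ (by rw [← hψ.1.1, ← hψ.1.2.1, h])
  · simp only [Function.comp, hφ.1.2.2.2, hψ.1.2.2.2]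
  · simp only [Function.comp, hφ.2, hψ.2]

theorem IsCoveringEndo.isVertex (hφ : IsCoveringEndo Ω p φ) {u : A'} (hu : Ω.IsVertex u) :
    Ω.IsVertex (φ u) := by
  rw [KGraphStruct.IsVertex, ← hφ.1.1, hu]

theorem IsCovering.isCoveringEndo_of_src_rng (hp : IsCovering Ω Λ p)
    (hpφ : ∀ a, p (φ a) = p a) (hsrc : ∀ a, Ω.src (φ a) = φ (Ω.src a))
    (hrng : ∀ a, Ω.rng (φ a) = φ (Ω.rng a)) : IsCoveringEndo Ω p φ := by
  refine ⟨⟨fun a => (hsrc a).symm, fun a => (hrng a).symm, fun a b h => ?_, fun a => ?_⟩,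
    hpφ⟩
  · have hφ : Ω.src (φ a) = Ω.rng (φ b) := by rw [hsrc, hrng, h]
    refine hp.src_inj _ _ ?_ ?_
    · rw [hsrc, Ω.src_comp _ _ h, Ω.src_comp _ _ hφ, hsrc]
    · rw [hpφ, hp.hom.2.2.1 _ _ h, hp.hom.2.2.1 _ _ hφ, hpφ, hpφ]
  · rw [← hp.hom.2.2.2, hpφ, hp.hom.2.2.2]

theorem IsCoveringEndo.map_act (hφ : IsCoveringEndo Ω p φ)
    (ha : CorrespondingAction Ω Λ F p act) (hp : IsCovering Ω Λ p) {c : F.B} {u : A'}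
    (hu : Ω.IsVertex u) (hc : F.G.src c = F.i (p u)) : φ (act c u) = act c (φ u) := by
  refine ha.induction_on (Q := fun c u => φ (act c u) = act c (φ u)) hp hu hc
    (fun μ => ?_) (fun a b w hw hb hab ihb iha => ?_) (fun a w hw hr ih => ?_)
  · rw [ha.act_cov, hφ.1.2.1, hφ.1.1, ← ha.act_cov (φ μ), hφ.2]
  · rw [ha.act_comp _ _ w hw hb hab, iha, ihb,
      ha.act_comp _ _ _ (hφ.isVertex hw) (by rw [hφ.2, hb]) hab]
  · have hv := ha.act_vertex (F.G.inv a) w hw (by rw [F.G.src_inv, hr])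
    rw [ha.act_act_inv hw hr] at ih
    rw [ih, ha.act_inv_act (hφ.isVertex hv.1) (by rw [hφ.2, hv.2, F.G.rng_inv])]

theorem IsCoveringEndo.eq_of_apply_eq (hφ : IsCoveringEndo Ω p φ) (hψ : IsCoveringEndo Ω p ψ)
    (ha : CorrespondingAction Ω Λ F p act) (hp : IsCovering Ω Λ p) (hconn : Ω.Connected)
    {v : A'} (hv : Ω.IsVertex v) (h : φ v = ψ v) : φ = ψ := by
  funext a
  obtain ⟨c, hc, hca⟩ := ha.exists_act_eq hp hconn (Ω.src_src a) hv
  refine hp.src_inj _ _ ?_ (by rw [hφ.2, hψ.2])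
  rw [← hφ.1.1, ← hψ.1.1, ← hca, hφ.map_act ha hp hv hc, hψ.map_act ha hp hv hc, h]

theorem IsCoveringEndo.stabilizer_apply (hφ : IsCoveringEndo Ω p φ) (hinj : Injective φ)
    (ha : CorrespondingAction Ω Λ F p act) (hp : IsCovering Ω Λ p) {v : A'}
    (hv : Ω.IsVertex v) : stabilizer F p act (φ v) = stabilizer F p act v := by
  ext a
  simp only [stabilizer, mem_ofPred_eq, hφ.2]
  refine and_congr_right fun h₁ => and_congr_right fun _ => ?_
  rw [← hφ.map_act ha hp hv h₁]
  exact hinj.eq_iff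

theorem exists_equivariant_map_of_stabilizer_subset (ha : CorrespondingAction Ω Λ F p act)
    (hp : IsCovering Ω Λ p) (hconn : Ω.Connected) {v w : A'} (hv : Ω.IsVertex v)
    (hw : Ω.IsVertex w) (hpw : p w = p v)
    (hsub : stabilizer F p act v ⊆ stabilizer F p act w) :
    ∃ T : A' → A', (∀ {u}, Ω.IsVertex u → Ω.IsVertex (T u) ∧ p (T u) = p u) ∧
      (∀ {e u}, Ω.IsVertex u → F.G.src e = F.i (p u) → T (act e u) = act e (T u)) ∧
      T v = w := by
  -- `T (e ⬝ v) = e ⬝ w`; the choice of `e` does not matter because `stab v ⊆ stab w`.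
  have hd : ∀ u, ∃ e, Ω.IsVertex u → F.G.src e = F.i (p v) ∧ act e v = u := fun u => by
    by_cases hu : Ω.IsVertex u
    · obtain ⟨e, he⟩ := ha.exists_act_eq hp hconn hu hv
      exact ⟨e, fun _ => he⟩
    · exact ⟨F.i (p v), fun h => absurd h hu⟩
  choose d hd using hd
  have hwv : F.i (p w) = F.i (p v) := by rw [hpw]
  have hT : ∀ {e u}, Ω.IsVertex u → F.G.src e = F.i (p v) → act e v = u →
      act (d u) w = act e w := fun hu he heu =>
    act_eq_act_of_stabilizer_subset ha hv hw hpw hsub (hd _ hu).1 he ((hd _ hu).2.trans heu.symm)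
  refine ⟨fun u => act (d u) w, fun {u} hu => ?_, fun {e u} hu he => ?_, ?_⟩
  · have hdu := ha.act_vertex (d u) v hv (hd u hu).1
    exact ⟨(ha.act_vertex (d u) w hw ((hd u hu).1.trans hwv.symm)).1,
      ha.p_act hp hw ((hd u hu).1.trans hwv.symm) hu (by rw [← hdu.2, (hd u hu).2])⟩
  · have hr : F.G.src e = F.G.rng (d u) := by
      rw [he, ← (ha.act_vertex (d u) v hv (hd u hu).1).2, (hd u hu).2]
    rw [← ha.act_comp _ _ w hw ((hd u hu).1.trans hwv.symm) hr]
    exact hT (ha.act_vertex e u hu he).1 (by rw [F.G.src_comp _ _ hr, (hd u hu).1])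
      (by rw [ha.act_comp _ _ v hv (hd u hu).1 hr, (hd u hu).2])
  · show act (d v) w = w
    rw [hT hv (F.isVertex_i (hp.isVertex_map hv)) (ha.act_id v hv), ← hpw, ha.act_id w hw]

theorem exists_isCoveringEndo_extending (ha : CorrespondingAction Ω Λ F p act)
    (hp : IsCovering Ω Λ p) {T : A' → A'}
    (hTv : ∀ {u}, Ω.IsVertex u → Ω.IsVertex (T u) ∧ p (T u) = p u)
    (hTact : ∀ {e u}, Ω.IsVertex u → F.G.src e = F.i (p u) → T (act e u) = act e (T u)) :
    ∃ φ, IsCoveringEndo Ω p φ ∧ ∀ {u}, Ω.IsVertex u → φ u = T u := by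
  let φ := fun a => srcLift Ω p (p a) (T (Ω.src a))
  have hφ : ∀ a, Ω.src (φ a) = T (Ω.src a) ∧ p (φ a) = p a := fun a =>
    srcLift_spec hp (hTv (Ω.src_src a)).1 (by rw [(hTv (Ω.src_src a)).2, hp.hom.1])
  have hφv : ∀ {u}, Ω.IsVertex u → φ u = T u := fun {u} hu => by
    simp only [φ, show Ω.src u = u from hu]
    exact srcLift_eq hp (hTv hu).1 (hTv hu).2
  refine ⟨φ, hp.isCoveringEndo_of_src_rng (fun a => (hφ a).2) (fun a => ?_) (fun a => ?_),
    hφv⟩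
  · rw [(hφ a).1, hφv (Ω.src_src a)]
  · rw [← ha.act_cov (φ a), (hφ a).1, (hφ a).2,
      ← hTact (Ω.src_src a) (by rw [← F.i_hom.1, ← hp.hom.1]), ha.act_cov,
      hφv (Ω.src_rng a)]

theorem exists_isCoveringEndo_apply_eq (ha : CorrespondingAction Ω Λ F p act)
    (hp : IsCovering Ω Λ p) (hconn : Ω.Connected) {v w : A'} (hv : Ω.IsVertex v)
    (hw : Ω.IsVertex w) (hpw : p w = p v)
    (hsub : stabilizer F p act v ⊆ stabilizer F p act w) :
    ∃ φ, IsCoveringEndo Ω p φ ∧ φ v = w := by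
  obtain ⟨T, hTv, hTact, hTw⟩ :=
    exists_equivariant_map_of_stabilizer_subset ha hp hconn hv hw hpw hsub
  obtain ⟨φ, hφ, hφT⟩ := exists_isCoveringEndo_extending ha hp hTv hTact
  exact ⟨φ, hφ, (hφT hv).trans hTw⟩

end CoveringEndo


section Deck

variable {k : ℕ} {A A' : Type} {Λ : KGraphStruct k A} {Ω : KGraphStruct k A'}
  {F : FundamentalGroupoid Λ} {p : A' → A} {act : F.B → A' → A'} {v : A'}
  {Θ : F.B → A' → A'}

variable (Ω F p act v) in
def IsDeckFamily (Θ : F.B → A' → A') : Prop :=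
  ∀ c ∈ F.G.normalizerAt (F.i (p v)) (stabilizer F p act v),
    IsCoveringEndo Ω p (Θ c) ∧ Θ c v = act (F.G.inv c) v

theorem exists_isDeckFamily (ha : CorrespondingAction Ω Λ F p act) (hp : IsCovering Ω Λ p)
    (hconn : Ω.Connected) (hv : Ω.IsVertex v) : ∃ Θ, IsDeckFamily Ω F p act v Θ := by
  have h : ∀ c, ∃ φ, c ∈ F.G.normalizerAt (F.i (p v)) (stabilizer F p act v) →
      IsCoveringEndo Ω p φ ∧ φ v = act (F.G.inv c) v := fun c => by
    by_cases hc : c ∈ F.G.normalizerAt (F.i (p v)) (stabilizer F p act v)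
    · obtain ⟨h₁, h₂, h₃⟩ :=
        (mem_normalizerAt_stabilizer_iff ha hv).1 (inv_mem_normalizerAt_stabilizer ha hv hc)
      obtain ⟨φ, hφ⟩ := exists_isCoveringEndo_apply_eq ha hp hconn hv
        (ha.act_vertex _ v hv h₁).1 (ha.p_act hp hv h₁ hv h₂) h₃.ge
      exact ⟨φ, fun _ => hφ⟩
    · exact ⟨id, fun h => absurd h hc⟩
  choose Θ hΘ using h
  exact ⟨Θ, hΘ⟩

namespace IsDeckFamily

theorem apply_act (hΘ : IsDeckFamily Ω F p act v Θ) (ha : CorrespondingAction Ω Λ F p act)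
    (hp : IsCovering Ω Λ p) (hv : Ω.IsVertex v) {c e : F.B}
    (hc : c ∈ F.G.normalizerAt (F.i (p v)) (stabilizer F p act v))
    (he : F.G.src e = F.i (p v)) : Θ c (act e v) = act e (act (F.G.inv c) v) := by
  rw [(hΘ c hc).1.map_act ha hp hv he, (hΘ c hc).2]

theorem comp (hΘ : IsDeckFamily Ω F p act v Θ) (ha : CorrespondingAction Ω Λ F p act)
    (hp : IsCovering Ω Λ p) (hconn : Ω.Connected) (hv : Ω.IsVertex v) {c c' : F.B}
    (hc : c ∈ F.G.normalizerAt (F.i (p v)) (stabilizer F p act v))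
    (hc' : c' ∈ F.G.normalizerAt (F.i (p v)) (stabilizer F p act v)) :
    Θ (F.G.comp c c') = Θ c ∘ Θ c' := by
  have hcc' := comp_mem_normalizerAt_stabilizer ha hv hc hc'
  have h : F.G.src c = F.G.rng c' := by rw [hc.1, hc'.2.1]
  refine (hΘ _ hcc').1.eq_of_apply_eq ((hΘ c hc).1.comp (hΘ c' hc').1) ha hp hconn hv ?_
  rw [(hΘ _ hcc').2, Function.comp_apply, (hΘ c' hc').2,
    hΘ.apply_act ha hp hv hc (by rw [F.G.src_inv, hc'.2.1]), F.G.inv_comp h,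
    ha.act_comp _ _ v hv (by rw [F.G.src_inv, hc.2.1])
      (by rw [F.G.src_inv, F.G.rng_inv, ← h])]

theorem isCoveringAut (hΘ : IsDeckFamily Ω F p act v Θ) (ha : CorrespondingAction Ω Λ F p act)
    (hp : IsCovering Ω Λ p) (hconn : Ω.Connected) (hv : Ω.IsVertex v) {c : F.B}
    (hc : c ∈ F.G.normalizerAt (F.i (p v)) (stabilizer F p act v)) :
    IsCoveringAut Ω Λ p (Θ c) := by
  have hinv : ∀ c ∈ F.G.normalizerAt (F.i (p v)) (stabilizer F p act v),
      Θ (F.G.inv c) ∘ Θ c = id := fun c hc => by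
    have hc' := inv_mem_normalizerAt_stabilizer ha hv hc
    refine ((hΘ _ hc').1.comp (hΘ c hc).1).eq_of_apply_eq isCoveringEndo_id ha hp hconn hv ?_
    rw [Function.comp_apply, (hΘ c hc).2, hΘ.apply_act ha hp hv hc' (by rw [F.G.src_inv, hc.2.1]),
      F.G.inv_inv, ha.act_inv_act hv hc.1, id]
  have hc' := inv_mem_normalizerAt_stabilizer ha hv hc
  refine ⟨bijective_iff_has_inverse.2 ⟨Θ (F.G.inv c), congrFun (hinv c hc), ?_⟩,
    (hΘ c hc).1⟩
  have h := congrFun (hinv _ hc')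
  rwa [F.G.inv_inv] at h

theorem exists_eq (hΘ : IsDeckFamily Ω F p act v Θ) (ha : CorrespondingAction Ω Λ F p act)
    (hp : IsCovering Ω Λ p) (hconn : Ω.Connected) (hv : Ω.IsVertex v) {φ : A' → A'}
    (hφ : IsCoveringAut Ω Λ p φ) :
    ∃ c ∈ F.G.normalizerAt (F.i (p v)) (stabilizer F p act v), Θ c = φ := by
  obtain ⟨hbij, hφ⟩ : Bijective φ ∧ IsCoveringEndo Ω p φ := hφ
  obtain ⟨e, he, hev⟩ := ha.exists_act_eq hp hconn (hφ.isVertex hv) hv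
  have hr : F.G.rng e = F.i (p v) := by rw [← (ha.act_vertex e v hv he).2, hev, hφ.2]
  have heN := (mem_normalizerAt_stabilizer_iff ha hv).2
    ⟨he, hr, by rw [hev, hφ.stabilizer_apply hbij.1 ha hp hv]⟩
  have heN' := inv_mem_normalizerAt_stabilizer ha hv heN
  exact ⟨_, heN', (hΘ _ heN').1.eq_of_apply_eq hφ ha hp hconn hv
    (by rw [(hΘ _ heN').2, F.G.inv_inv, hev])⟩

theorem eq_iff (hΘ : IsDeckFamily Ω F p act v Θ) (ha : CorrespondingAction Ω Λ F p act)
    (hp : IsCovering Ω Λ p) (hconn : Ω.Connected) (hv : Ω.IsVertex v) {c c' : F.B}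
    (hc : c ∈ F.G.normalizerAt (F.i (p v)) (stabilizer F p act v))
    (hc' : c' ∈ F.G.normalizerAt (F.i (p v)) (stabilizer F p act v)) :
    Θ c = Θ c' ↔ F.G.comp (F.G.inv c) c' ∈ stabilizer F p act v := by
  have hi : F.G.src (F.G.inv c) = F.i (p v) := by rw [F.G.src_inv, hc.2.1]
  obtain ⟨hw, hpw⟩ := ha.act_vertex (F.G.inv c) v hv hi
  rw [F.G.rng_inv] at hpw
  have hg : F.G.src (F.G.inv c') = F.G.rng c := by rw [F.G.src_inv, hc'.2.1, hc.2.1]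
  have hstab : stabilizer F p act (act (F.G.inv c) v) = stabilizer F p act v :=
    ((mem_normalizerAt_stabilizer_iff ha hv).1 (inv_mem_normalizerAt_stabilizer ha hv hc)).2.2
  -- `c'⁻¹ ⬝ v = (c'⁻¹ c) ⬝ (c⁻¹ ⬝ v)`, so `Θ c = Θ c'` says that `c'⁻¹ c` fixes
  -- `c⁻¹ ⬝ v`, whose stabilizer is that of `v`.
  have hact : act (F.G.inv c') v = act (F.G.comp (F.G.inv c') c) (act (F.G.inv c) v) := by
    rw [ha.act_comp _ _ _ hw (by rw [hpw]) hg, ha.act_act_inv hv hc.2.1]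
  have hmem : F.G.comp (F.G.inv c') c ∈ stabilizer F p act v ↔
      F.G.comp (F.G.inv c) c' ∈ stabilizer F p act v := by
    have h : F.G.inv (F.G.comp (F.G.inv c') c) = F.G.comp (F.G.inv c) c' := by
      rw [F.G.inv_comp hg, F.G.inv_inv]
    refine ⟨fun hm => h ▸ inv_mem_stabilizer ha hv hm, fun hm => ?_⟩
    rw [← F.G.inv_inv (F.G.comp (F.G.inv c') c), h]
    exact inv_mem_stabilizer ha hv hm
  rw [← hmem, ← hstab]
  constructor
  · intro h
    refine ⟨by rw [F.G.src_comp _ _ hg, hpw], by rw [F.G.rng_comp _ _ hg, F.G.rng_inv, hpw,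
      hc'.1, hc.1], ?_⟩
    rw [← hact, ← (hΘ c hc).2, ← (hΘ c' hc').2, h]
  · intro h
    refine (hΘ c hc).1.eq_of_apply_eq (hΘ c' hc').1 ha hp hconn hv ?_
    rw [(hΘ c hc).2, (hΘ c' hc').2, hact, h.2.2]

end IsDeckFamily

end Deck

/-- `Aut(Ω,p) ≅ N / p_*π(Ω,v)` is encoded by a map `Θ` from the normalizer `N` onto the
automorphisms that is multiplicative and identifies `c, c'` exactly when
`c⁻¹ c' ∈ p_*π(Ω,v)`. -/
theorem aut_iso_normalizer_quotient_general {k : ℕ} {A A' : Type}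
    (Λ : KGraphStruct k A) (Ω : KGraphStruct k A')
    (FΛ : FundamentalGroupoid Λ) (FΩ : FundamentalGroupoid Ω)
    (p : A' → A) (hp : IsCovering Ω Λ p) (hconn : Ω.Connected)
    (pst : FΩ.B → FΛ.B) (hpst : IsGpdHomFun FΩ.G FΛ.G pst)
    (hpsti : ∀ a, pst (FΩ.i a) = FΛ.i (p a))
    (x : A) (v : A') (hv : Ω.IsVertex v) (hpv : p v = x) :
    ∃ Θ : FΛ.B → (A' → A'),
      (∀ c ∈ FΛ.G.normalizerAt (FΛ.i x) (pst '' FΩ.pi1 v),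
        IsCoveringAut Ω Λ p (Θ c)) ∧
      (∀ φ, IsCoveringAut Ω Λ p φ →
        ∃ c ∈ FΛ.G.normalizerAt (FΛ.i x) (pst '' FΩ.pi1 v), Θ c = φ) ∧
      (∀ c ∈ FΛ.G.normalizerAt (FΛ.i x) (pst '' FΩ.pi1 v),
        ∀ c' ∈ FΛ.G.normalizerAt (FΛ.i x) (pst '' FΩ.pi1 v),
          Θ (FΛ.G.comp c c') = Θ c ∘ Θ c') ∧
      (∀ c ∈ FΛ.G.normalizerAt (FΛ.i x) (pst '' FΩ.pi1 v),
        ∀ c' ∈ FΛ.G.normalizerAt (FΛ.i x) (pst '' FΩ.pi1 v),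
          (Θ c = Θ c' ↔ FΛ.G.comp (FΛ.G.inv c) c' ∈ pst '' FΩ.pi1 v)) := by
  obtain ⟨act, ha⟩ := exists_correspondingAction hp FΛ
  subst hpv
  rw [ha.pst_image_pi1 hp hpst hpsti hv]
  obtain ⟨Θ, hΘ⟩ := exists_isDeckFamily ha hp hconn hv
  exact ⟨Θ, fun c hc => hΘ.isCoveringAut ha hp hconn hv hc,
    fun φ hφ => hΘ.exists_eq ha hp hconn hv hφ,
    fun c hc c' hc' => hΘ.comp ha hp hconn hv hc hc',
    fun c hc c' hc' => hΘ.eq_iff ha hp hconn hv hc hc'⟩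

/-- For a connected covering `p : Ω → Λ`, `x ∈ Λ⁰` and
`v ∈ p⁻¹(x)`, the automorphism group `Aut(Ω,p)` is isomorphic as a group to
`N(p₊π(Ω,v)) / p₊π(Ω,v)`, the quotient of the normalizer of `p₊π(Ω,v)` in
`π(Λ,x)`.  The isomorphism is packaged as a map `Θ` from the normalizer onto
the covering automorphisms which is multiplicative and identifies `c, c'`
exactly when `c⁻¹ c' ∈ p₊π(Ω,v)`. -/
theorem aut_iso_normalizer_quotient {k : ℕ} {A A' : Type}
    (Λ : KGraphStruct k A) (Ω : KGraphStruct k A')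
    (FΛ : FundamentalGroupoid Λ) (FΩ : FundamentalGroupoid Ω)
    (p : A' → A) (hp : IsCovering Ω Λ p) (hconn : Ω.Connected)
    (pst : FΩ.B → FΛ.B) (hpst : IsGpdHomFun FΩ.G FΛ.G pst)
    (hpsti : ∀ a, pst (FΩ.i a) = FΛ.i (p a))
    (x : A) (hx : Λ.IsVertex x) (v : A') (hv : Ω.IsVertex v) (hpv : p v = x) :
    ∃ Θ : FΛ.B → (A' → A'),
      (∀ c ∈ FΛ.G.normalizerAt (FΛ.i x) (pst '' FΩ.pi1 v),
        IsCoveringAut Ω Λ p (Θ c)) ∧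
      (∀ φ, IsCoveringAut Ω Λ p φ →
        ∃ c ∈ FΛ.G.normalizerAt (FΛ.i x) (pst '' FΩ.pi1 v), Θ c = φ) ∧
      (∀ c ∈ FΛ.G.normalizerAt (FΛ.i x) (pst '' FΩ.pi1 v),
        ∀ c' ∈ FΛ.G.normalizerAt (FΛ.i x) (pst '' FΩ.pi1 v),
          Θ (FΛ.G.comp c c') = Θ c ∘ Θ c') ∧
      (∀ c ∈ FΛ.G.normalizerAt (FΛ.i x) (pst '' FΩ.pi1 v),
        ∀ c' ∈ FΛ.G.normalizerAt (FΛ.i x) (pst '' FΩ.pi1 v),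
          (Θ c = Θ c' ↔ FΛ.G.comp (FΛ.G.inv c) c' ∈ pst '' FΩ.pi1 v)) :=
  aut_iso_normalizer_quotient_general Λ Ω FΛ FΩ p hp hconn pst hpst hpsti x v hv hpv

end KGraphCovering
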